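/- arXiv:1110.1050 — 4 statements merged into one kernel-verified Lean document; each statement's English description precedes it below -/
import Mathlib

section
/- Let A, B be orthogonal subspaces of a real inner product space V with V = A ⊕ B, and ξ, η ∈ V nonzero with ‖ξ‖² + ‖η‖² = 1. If ‖ξ_A + η_A‖² = c for some c ∈ (1,2), then ⟨ξ,ξ⟩ + ⟨η,η⟩ − ⟨ξ,η⟩ − ⟨ξ_A,η_A⟩ − (1/4)⟨ξ_B,η_B⟩ > 0, i.e. the angle cone variation of the quantity Θ(ξ,η) = ‖ξ_A+η_A‖²/(‖ξ‖²+‖η‖²) along the Jacobi flow with curvature R(v,ξ)v = −ξ_A − (1/4)ξ_B is strictly positive on the boundary of the cone. -/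
open RealInnerProductSpace

lemma stmt_4_aux (X Y U W p q c : ℝ) (hXn : 0 ≤ X) (hYn : 0 ≤ Y) (hUn : 0 ≤ U)
    (hWn : 0 ≤ W) (csA : p * p ≤ X * Y) (csB : q * q ≤ U * W)
    (hn1 : X + U + Y + W = 1) (hcon : X + 2 * p + Y = c) (hc1 : 1 < c) (hc2 : c < 2) :
    0 < (X + U) + (Y + W) - (p + q) - p - (1/4) * q := by
  have h2p : 2 * p ≤ X + Y := by nlinarith [sq_nonneg (X - Y), sq_nonneg (X + Y)]
  have h2q : 2 * q ≤ U + W := by nlinarith [sq_nonneg (U - W), sq_nonneg (U + W)]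
  linarith

/-- strict positivity of the angle cone variation on the cone boundary. -/
theorem stmt_4 {V : Type*} [NormedAddCommGroup V] [InnerProductSpace ℝ V]
    (A B : Submodule ℝ V) (hAB : ∀ a ∈ A, ∀ b ∈ B, ⟪a, b⟫ = 0)
    (hsum : A ⊔ B = ⊤)
    (ξA ηA ξB ηB : V) (hξA : ξA ∈ A) (hηA : ηA ∈ A) (hξB : ξB ∈ B) (hηB : ηB ∈ B)
    (ξ η : V) (hξ : ξ = ξA + ξB) (hη : η = ηA + ηB)
    (hξ0 : ξ ≠ 0) (hη0 : η ≠ 0)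
    (hnorm : ‖ξ‖^2 + ‖η‖^2 = 1)
    (c : ℝ) (hc : c ∈ Set.Ioo (1:ℝ) 2)
    (hcone : ‖ξA + ηA‖^2 = c) :
    0 < ⟪ξ, ξ⟫ + ⟪η, η⟫ - ⟪ξ, η⟫ - ⟪ξA, ηA⟫ - (1/4) * ⟪ξB, ηB⟫ := by
  obtain ⟨hc1, hc2⟩ := hc
  have o1 : ⟪ξA, ξB⟫ = 0 := hAB _ hξA _ hξB
  have o2 : ⟪ξA, ηB⟫ = 0 := hAB _ hξA _ hηB
  have o3 : ⟪ηA, ξB⟫ = 0 := hAB _ hηA _ hξB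
  have o4 : ⟪ηA, ηB⟫ = 0 := hAB _ hηA _ hηB
  have o3' : ⟪ξB, ηA⟫ = 0 := by rw [real_inner_comm]; exact o3
  have hxx : ⟪ξ, ξ⟫ = ⟪ξA, ξA⟫ + ⟪ξB, ξB⟫ := by
    rw [hξ, real_inner_add_add_self, o1]; ring
  have hyy : ⟪η, η⟫ = ⟪ηA, ηA⟫ + ⟪ηB, ηB⟫ := by
    rw [hη, real_inner_add_add_self, o4]; ring
  have hxy : ⟪ξ, η⟫ = ⟪ξA, ηA⟫ + ⟪ξB, ηB⟫ := by
    rw [hξ, hη, inner_add_left, inner_add_right, inner_add_right, o2, o3']; ring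
  have hnx : ‖ξ‖^2 = ⟪ξA, ξA⟫ + ⟪ξB, ξB⟫ := by
    rw [← real_inner_self_eq_norm_sq]; exact hxx
  have hny : ‖η‖^2 = ⟪ηA, ηA⟫ + ⟪ηB, ηB⟫ := by
    rw [← real_inner_self_eq_norm_sq]; exact hyy
  have hcone' : ⟪ξA, ξA⟫ + 2 * ⟪ξA, ηA⟫ + ⟪ηA, ηA⟫ = c := by
    rw [← hcone, ← real_inner_self_eq_norm_sq, real_inner_add_add_self]
  rw [hnx, hny] at hnorm
  rw [hxx, hyy, hxy]
  exact stmt_4_aux _ _ _ _ _ _ c real_inner_self_nonneg real_inner_self_nonneg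
    real_inner_self_nonneg real_inner_self_nonneg
    (real_inner_mul_inner_self_le ξA ηA) (real_inner_mul_inner_self_le ξB ηB)
    (by linarith) hcone' hc1 hc2
end

section
/- Let φ_t be a flow on a compact manifold N with a continuous cone field C(x) = C(x, E(x), δ) and let Θ(v, E) := ‖Pr_E v‖² / ‖v‖². Suppose there exists a > 0 such that for every x ∈ N and every unit vector v with Θ(v, E(x)) = c (the cone boundary), d/dt|_{t=0} Θ(dφ_t v, E(φ_t x)) ≥ a. Then the cone field is properly invariant: for all t > 0, dφ_t(C(x)) is contained in the interior of C(φ_t x). -/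
/-!
Along an orbit, `f t = Θ (φ t x) (D t x v)` is a real function which starts in the cone
(`c ≤ f 0`). By the flow and cocycle identities and the scale invariance of `Θ`, the derivative
of `f` at any time `s` with `f s = c` is the derivative at time `0` of the orbit through the unit
boundary vector `D s x v / ‖D s x v‖` over `φ s x`, hence at least `a > 0`. A differentiable real
function with positive derivative wherever it meets the level `c` can never come back down to `c`.
-/

open Set

theorem lt_of_deriv_pos_of_eq_level {f : ℝ → ℝ} {c : ℝ} (hf : Differentiable ℝ f)
    (h0 : c ≤ f 0) (hd : ∀ s, f s = c → 0 < deriv f s) {t : ℝ} (ht : 0 < t) : c < f t := by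
  have hge : ∀ s, 0 ≤ s → c ≤ f s := fun s hs =>
    image_le_of_deriv_right_lt_deriv_boundary (f := fun _ => c) (f' := fun _ => 0)
      continuousOn_const (fun _ _ => hasDerivWithinAt_const _ _ _) h0
      (fun r => (hf r).hasDerivAt) (fun r _ hr => hd r hr.symm) ⟨hs, le_rfl⟩
  refine (hge t ht.le).lt_of_ne fun hct => (hd t hct.symm).ne' ?_
  have hmin : IsLocalMin f t :=
    Filter.mem_of_superset (Ioi_mem_nhds ht) fun s hs => hct ▸ hge s (le_of_lt hs)
  exact hmin.deriv_eq_zero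

theorem norm_apply_sq_div_norm_sq_smul {V W : Type*} [NormedAddCommGroup V] [NormedSpace ℝ V]
    [NormedAddCommGroup W] [NormedSpace ℝ W] (L : V →L[ℝ] W) {r : ℝ} (hr : r ≠ 0) (w : V) :
    ‖L (r • w)‖ ^ 2 / ‖r • w‖ ^ 2 = ‖L w‖ ^ 2 / ‖w‖ ^ 2 := by
  rw [map_smul, norm_smul, norm_smul, mul_pow, mul_pow,
    mul_div_mul_left _ _ (pow_ne_zero 2 (norm_ne_zero_iff.mpr hr))]

theorem stmt_12_general {M : Type*}
    {V : Type*} [NormedAddCommGroup V] [NormedSpace ℝ V]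
    (φ : ℝ → M → M) (hφ0 : ∀ x, φ 0 x = x) (hφflow : ∀ s t x, φ (s + t) x = φ s (φ t x))
    (D : ℝ → M → (V →L[ℝ] V)) (hD0 : ∀ x, D 0 x = ContinuousLinearMap.id ℝ V)
    (hDcoc : ∀ s t x, D (s + t) x = (D s (φ t x)).comp (D t x))
    (hDinj : ∀ t x v, v ≠ 0 → D t x v ≠ 0)
    (P : M → (V →L[ℝ] V))
    (Θ : M → V → ℝ) (hΘ : ∀ x v, Θ x v = ‖P x v‖^2 / ‖v‖^2)
    (c a : ℝ) (ha : 0 < a)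
    (hdiff : ∀ x v, v ≠ 0 → Differentiable ℝ (fun t => Θ (φ t x) (D t x v)))
    (hder : ∀ x v, ‖v‖ = 1 → Θ x v = c →
      a ≤ deriv (fun t => Θ (φ t x) (D t x v)) 0) :
    ∀ x v, v ≠ 0 → c ≤ Θ x v → ∀ t, 0 < t → c < Θ (φ t x) (D t x v) := by
  have hΘsmul : ∀ y w {r : ℝ}, r ≠ 0 → Θ y (r • w) = Θ y w := fun y w r hr => by
    rw [hΘ, hΘ, norm_apply_sq_div_norm_sq_smul _ hr]
  intro x v hv hcv t ht
  set f : ℝ → ℝ := fun t => Θ (φ t x) (D t x v) with hf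
  refine lt_of_deriv_pos_of_eq_level (hdiff x v hv) (by simpa [hf, hφ0, hD0] using hcv)
    (fun s hs => ha.trans_le ?_) ht
  set w := D s x v
  have hw : ‖w‖⁻¹ ≠ 0 := inv_ne_zero (norm_ne_zero_iff.mpr (hDinj s x v hv))
  have hshift : (fun r => Θ (φ r (φ s x)) (D r (φ s x) (‖w‖⁻¹ • w))) = fun r => f (r + s) := by
    funext r
    simp only [hf, hφflow, hDcoc, map_smul, hΘsmul _ _ hw, ContinuousLinearMap.comp_apply, w]
  have hbound := hder (φ s x) (‖w‖⁻¹ • w) (norm_smul_inv_norm (hDinj s x v hv))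
    (by rwa [hΘsmul _ _ hw])
  rwa [hshift, deriv_comp_add_const, zero_add] at hbound

/-- proper invariance of a cone field from a uniform derivative bound on the
cone boundary, for a flow `φ` on a compact space with derivative cocycle `D` and projection
field `P`, with `Θ(x,v) = ‖P x v‖²/‖v‖²` and cone `{Θ ≥ c}`. -/
theorem stmt_12 {M : Type*} [TopologicalSpace M] [CompactSpace M]
    {V : Type*} [NormedAddCommGroup V] [NormedSpace ℝ V]
    (φ : ℝ → M → M) (hφ0 : ∀ x, φ 0 x = x) (hφflow : ∀ s t x, φ (s + t) x = φ s (φ t x))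
    (D : ℝ → M → (V →L[ℝ] V)) (hD0 : ∀ x, D 0 x = ContinuousLinearMap.id ℝ V)
    (hDcoc : ∀ s t x, D (s + t) x = (D s (φ t x)).comp (D t x))
    (hDinj : ∀ t x v, v ≠ 0 → D t x v ≠ 0)
    (P : M → (V →L[ℝ] V))
    (Θ : M → V → ℝ) (hΘ : ∀ x v, Θ x v = ‖P x v‖^2 / ‖v‖^2)
    (c a : ℝ) (hc : c ∈ Set.Ioo (1:ℝ) 2) (ha : 0 < a)
    (hdiff : ∀ x v, v ≠ 0 → Differentiable ℝ (fun t => Θ (φ t x) (D t x v)))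
    (hder : ∀ x v, ‖v‖ = 1 → Θ x v = c →
      a ≤ deriv (fun t => Θ (φ t x) (D t x v)) 0) :
    ∀ x v, v ≠ 0 → c ≤ Θ x v → ∀ t, 0 < t → c < Θ (φ t x) (D t x v) :=
  stmt_12_general φ hφ0 hφflow D hD0 hDcoc hDinj P Θ hΘ c a ha hdiff hder
end

section
/- Let α : ℝ × (−ε,ε)^{n−1} → ℝ be defined by α(t,x) = Σ_{k=r+1}^{n−1} x_k² Φ_k(x), where each Φ_k(x) = (1/4)∏_{j=1}^{n−1} φ_{k,j}(x_j) with smooth bump functions satisfying ‖φ_{k,j}‖_∞ ≤ C, ‖φ_{k,j}'‖_∞ ≤ C/ε, ‖φ_{k,j}''‖_∞ ≤ C/ε² for j ≠ k, and ‖φ_{k,k}‖_∞ ≤ C, ‖φ_{k,k}'‖_∞ ≤ C/ε², ‖φ_{k,k}''‖_∞ ≤ C/ε⁴, and with supp φ_{k,j} ⊂ [−ε,ε] for j ≠ k and supp φ_{k,k} ⊂ [−ε²,ε²]. Then there is M₀ > 0 independent of ε such that on the support of α: |α| ≤ M₀ε⁴, |∂_{x_j}α| ≤ M₀ε², |∂²_{x_i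 x_j}α| ≤ M₀ε for i ≠ j or min(i,j) ≤ r, and |∂²_{x_k x_k}α| ≤ M₀ for k = r+1,…,n−1. -/
open Finset
open scoped ContDiff

private lemma abs_prod_le_pow {m : ℕ} {D : ℝ} (hD : 1 ≤ D) (s : Finset (Fin m)) (g : Fin m → ℝ)
    (h : ∀ j ∈ s, |g j| ≤ D) : |∏ j ∈ s, g j| ≤ D ^ m := by
  calc |∏ j ∈ s, g j| = ∏ j ∈ s, |g j| := by rw [Finset.abs_prod]
    _ ≤ ∏ _j ∈ s, D := Finset.prod_le_prod (fun j _ => abs_nonneg _) h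
    _ = D ^ s.card := by rw [Finset.prod_const]
    _ ≤ D ^ m := by
        apply pow_le_pow_right₀ hD
        exact le_trans (Finset.card_le_univ s) (by simp)

private lemma abs_prod_le_one_special {m : ℕ} {D c : ℝ} (hD : 1 ≤ D) {s : Finset (Fin m)}
    {g : Fin m → ℝ} {k : Fin m} (hk : k ∈ s) (hgk : |g k| ≤ c)
    (hother : ∀ j ∈ s, j ≠ k → |g j| ≤ D) : |∏ j ∈ s, g j| ≤ c * D ^ m := by
  rw [← Finset.mul_prod_erase s g hk, abs_mul]
  have h1 : |∏ j ∈ s.erase k, g j| ≤ D ^ m :=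
    abs_prod_le_pow hD _ _
      (fun j hj => hother j (Finset.mem_of_mem_erase hj) (Finset.ne_of_mem_erase hj))
  exact mul_le_mul hgk h1 (abs_nonneg _) (le_trans (abs_nonneg _) hgk)

private lemma abs_prod_le_two_special {m : ℕ} {D c₁ c₂ : ℝ} (hD : 1 ≤ D) {s : Finset (Fin m)}
    {g : Fin m → ℝ} {k₁ k₂ : Fin m} (hk₁ : k₁ ∈ s) (hk₂ : k₂ ∈ s) (hne : k₁ ≠ k₂)
    (hg1 : |g k₁| ≤ c₁) (hg2 : |g k₂| ≤ c₂)
    (hother : ∀ j ∈ s, j ≠ k₁ → j ≠ k₂ → |g j| ≤ D) :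
    |∏ j ∈ s, g j| ≤ c₁ * (c₂ * D ^ m) := by
  rw [← Finset.mul_prod_erase s g hk₁, abs_mul]
  have h1 : |∏ j ∈ s.erase k₁, g j| ≤ c₂ * D ^ m :=
    abs_prod_le_one_special hD (Finset.mem_erase.mpr ⟨hne.symm, hk₂⟩) hg2
      (fun j hj hjk => hother j (Finset.mem_of_mem_erase hj) (Finset.ne_of_mem_erase hj) hjk)
  exact mul_le_mul hg1 h1 (abs_nonneg _) (le_trans (abs_nonneg _) hg1)

private lemma pprod_contDiff {m : ℕ} (ψ : Fin m → ℝ → ℝ)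
    (h : ∀ j, ContDiff ℝ (∞ : WithTop ℕ∞) (ψ j)) :
    ContDiff ℝ (∞ : WithTop ℕ∞) (fun y : Fin m → ℝ => ∏ j, ψ j (y j)) :=
  contDiff_prod (fun i _ =>
    (h i).comp ((ContinuousLinearMap.proj i : (Fin m → ℝ) →L[ℝ] ℝ).contDiff))

private lemma pprod_fderiv {m : ℕ} (ψ : Fin m → ℝ → ℝ) (h : ∀ j, Differentiable ℝ (ψ j))
    (x : Fin m → ℝ) (i : Fin m) :
    fderiv ℝ (fun y : Fin m → ℝ => ∏ j, ψ j (y j)) x (Pi.single i 1)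
      = deriv (ψ i) (x i) * ∏ j ∈ Finset.univ.erase i, ψ j (x j) := by
  classical
  have hg : ∀ j : Fin m, HasFDerivAt (fun y : Fin m → ℝ => ψ j (y j))
      ((deriv (ψ j) (x j)) • (ContinuousLinearMap.proj j : (Fin m → ℝ) →L[ℝ] ℝ)) x := by
    intro j
    have h1 : HasDerivAt (ψ j) (deriv (ψ j) (x j)) (x j) := ((h j) (x j)).hasDerivAt
    have h2 : HasFDerivAt (fun y : Fin m → ℝ => y j)
        (ContinuousLinearMap.proj j : (Fin m → ℝ) →L[ℝ] ℝ) x :=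
      (ContinuousLinearMap.proj j : (Fin m → ℝ) →L[ℝ] ℝ).hasFDerivAt
    exact h1.comp_hasFDerivAt x h2
  have hF : HasFDerivAt (fun y : Fin m → ℝ => ∏ j, ψ j (y j))
      (∑ j, (∏ j' ∈ Finset.univ.erase j, ψ j' (x j')) •
        ((deriv (ψ j) (x j)) • (ContinuousLinearMap.proj j : (Fin m → ℝ) →L[ℝ] ℝ))) x :=
    HasFDerivAt.finset_prod (fun j _ => hg j)
  rw [hF.fderiv]
  simp only [ContinuousLinearMap.sum_apply, ContinuousLinearMap.smul_apply,
    ContinuousLinearMap.proj_apply, smul_eq_mul]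
  rw [Finset.sum_eq_single i (fun b _ hb => by simp [Pi.single_apply, hb]) 
    (fun h => absurd (Finset.mem_univ i) h)]
  simp [Pi.single_apply]
  ring

private lemma pprod_fderiv_fun {m : ℕ} (ψ : Fin m → ℝ → ℝ)
    (h : ∀ j, ContDiff ℝ (∞ : WithTop ℕ∞) (ψ j)) (i : Fin m) :
    (fun y => fderiv ℝ (fun y : Fin m → ℝ => ∏ j, ψ j (y j)) y (Pi.single i 1))
      = fun y : Fin m → ℝ => ∏ j, (Function.update ψ i (deriv (ψ i))) j (y j) := by
  funext y
  rw [pprod_fderiv ψ (fun j => (h j).differentiable (by simp)) y i]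
  rw [← Finset.mul_prod_erase Finset.univ
    (fun j => (Function.update ψ i (deriv (ψ i))) j (y j)) (Finset.mem_univ i)]
  rw [Function.update_self]
  congr 1
  refine Finset.prod_congr rfl (fun j hj => ?_)
  rw [Function.update_of_ne (Finset.ne_of_mem_erase hj)]

private lemma fderiv_zero_on_open {m : ℕ} {U : Set (Fin m → ℝ)} (hU : IsOpen U)
    {f : (Fin m → ℝ) → ℝ} (hf : ∀ y ∈ U, f y = 0) {x : Fin m → ℝ} (hx : x ∈ U) :
    fderiv ℝ f x = 0 := by
  have h : f =ᶠ[nhds x] (fun _ => (0:ℝ)) := Filter.eventuallyEq_of_mem (hU.mem_nhds hx) hf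
  rw [h.fderiv_eq]
  exact fderiv_const_apply 0

private lemma deriv_quarter_sq_mul (φ : ℝ → ℝ) (hφ : ContDiff ℝ (∞ : WithTop ℕ∞) φ) :
    deriv (fun t => 1/4 * (t^2 * φ t)) = fun t => 1/4 * (2*t*φ t + t^2 * deriv φ t) := by
  funext t
  have h2 : HasDerivAt (fun t : ℝ => t^2) (2*t) t := by
    simpa using hasDerivAt_pow 2 t
  have h3 : HasDerivAt φ (deriv φ t) t := (hφ.differentiable (by simp) t).hasDerivAt
  have h1 : HasDerivAt (fun t : ℝ => t^2 * φ t) (2*t*φ t + t^2 * deriv φ t) t := h2.mul h3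
  exact (h1.const_mul (1/4 : ℝ)).deriv

private lemma deriv2_quarter_sq_mul (φ : ℝ → ℝ) (hφ : ContDiff ℝ (∞ : WithTop ℕ∞) φ) :
    deriv (deriv (fun t => 1/4 * (t^2 * φ t)))
      = fun t => 1/4 * (2*φ t + 4*t*deriv φ t + t^2 * deriv (deriv φ) t) := by
  rw [deriv_quarter_sq_mul φ hφ]
  funext t
  have hφ' : ContDiff ℝ (∞ : WithTop ℕ∞) (deriv φ) := (contDiff_infty_iff_deriv.mp hφ).2
  have h3 : HasDerivAt φ (deriv φ t) t := (hφ.differentiable (by simp) t).hasDerivAt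
  have h3' : HasDerivAt (deriv φ) (deriv (deriv φ) t) t :=
    (hφ'.differentiable (by simp) t).hasDerivAt
  have h2 : HasDerivAt (fun t : ℝ => t^2) (2*t) t := by simpa using hasDerivAt_pow 2 t
  have ha : HasDerivAt (fun t : ℝ => 2*t*φ t) (2*φ t + 2*t*deriv φ t) t := by
    have := ((hasDerivAt_id t).const_mul (2:ℝ)).fun_mul h3
    simpa [mul_comm, mul_assoc] using this
  have hb : HasDerivAt (fun t : ℝ => t^2 * deriv φ t) (2*t*deriv φ t + t^2 * deriv (deriv φ) t) t :=
    h2.mul h3'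
  have hab := (ha.fun_add hb).const_mul (1/4 : ℝ)
  rw [hab.deriv]
  ring

set_option maxHeartbeats 1600000 in
/-- the estimates lemma for the deformation term
`α(x) = Σ_{k ≥ r} x_k² Φ_k(x)`, `Φ_k(x) = (1/4)∏_j φ_{k,j}(x_j)`: there is `M₀` independent
of `ε` bounding `|α| ≤ M₀ε⁴`, `|∂_j α| ≤ M₀ε²`, mixed/strong second derivatives by `M₀ε`,
and pure weak second derivatives `∂²_{kk}α` by `M₀`, on the support of `α`. -/
theorem stmt_14 (m r : ℕ) (C : ℝ) (hC : 0 < C) :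
    ∃ M₀ : ℝ, 0 < M₀ ∧ ∀ ε : ℝ, ε ∈ Set.Ioc (0:ℝ) 1 →
      ∀ φ : Fin m → Fin m → ℝ → ℝ,
      (∀ k j, ContDiff ℝ (⊤ : ℕ∞) (φ k j)) →
      (∀ k j t, |φ k j t| ≤ C) →
      (∀ k j t, j ≠ k → |deriv (φ k j) t| ≤ C / ε) →
      (∀ k j t, j ≠ k → |deriv (deriv (φ k j)) t| ≤ C / ε^2) →
      (∀ k t, |deriv (φ k k) t| ≤ C / ε^2) →
      (∀ k t, |deriv (deriv (φ k k)) t| ≤ C / ε^4) →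
      (∀ k j t, j ≠ k → ε < |t| → φ k j t = 0) →
      (∀ k t, ε^2 < |t| → φ k k t = 0) →
      ∀ Φ : Fin m → (Fin m → ℝ) → ℝ,
      (∀ k x, Φ k x = (1/4) * ∏ j, φ k j (x j)) →
      ∀ α : (Fin m → ℝ) → ℝ,
      (∀ x, α x = ∑ k ∈ Finset.univ.filter (fun k : Fin m => r ≤ (k : ℕ)),
        (x k)^2 * Φ k x) →
      ∀ x : Fin m → ℝ, α x ≠ 0 →
        |α x| ≤ M₀ * ε^4 ∧
        (∀ j : Fin m, |fderiv ℝ α x (Pi.single j 1)| ≤ M₀ * ε^2) ∧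
        (∀ i j : Fin m, (i ≠ j ∨ (i : ℕ) < r ∨ (j : ℕ) < r) →
          |fderiv ℝ (fun y => fderiv ℝ α y (Pi.single j 1)) x (Pi.single i 1)| ≤ M₀ * ε) ∧
        (∀ k : Fin m, r ≤ (k : ℕ) →
          |fderiv ℝ (fun y => fderiv ℝ α y (Pi.single k 1)) x (Pi.single k 1)| ≤ M₀) := by
  classical
  set D : ℝ := max C 1 with hDdef
  have hD1 : (1:ℝ) ≤ D := le_max_right _ _
  have hCD : C ≤ D := le_max_left _ _
  have hD0 : (0:ℝ) < D := lt_of_lt_of_le one_pos hD1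
  refine ⟨(2*m+4) * D^(m+3), by positivity, ?_⟩
  intro ε hε φ hφ hφb hφ1 hφ2 hφk1 hφk2 hsupp hsuppk Φ hΦ α hα x hx
  obtain ⟨hε0, hε1⟩ := hε
  set K : Finset (Fin m) := Finset.univ.filter (fun k : Fin m => r ≤ (k : ℕ)) with hKdef
  set ψ : Fin m → Fin m → ℝ → ℝ :=
    fun k => Function.update (φ k) k (fun t => 1/4 * (t^2 * φ k k t)) with hψdef
  have hψkk : ∀ k, ψ k k = fun t => 1/4 * (t^2 * φ k k t) := by
    intro k; rw [hψdef]; exact Function.update_self _ _ _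
  have hψne : ∀ k j, j ≠ k → ψ k j = φ k j := by
    intro k j h; rw [hψdef]; exact Function.update_of_ne h _ _
  have hψsm : ∀ k j, ContDiff ℝ (∞ : WithTop ℕ∞) (ψ k j) := by
    intro k j
    by_cases h : j = k
    · subst h; rw [hψkk]
      exact contDiff_const.mul ((contDiff_id.pow 2).mul ((hφ j j).of_le (by simp)))
    · rw [hψne k j h]; exact (hφ k j).of_le (by simp)
  -- derivative formulas for the special entry
  have hψd : ∀ k, deriv (ψ k k) = fun t => 1/4 * (2*t*φ k k t + t^2 * deriv (φ k k) t) := by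
    intro k; rw [hψkk]; exact deriv_quarter_sq_mul _ ((hφ k k).of_le (by simp))
  have hψdd : ∀ k, deriv (deriv (ψ k k))
      = fun t => 1/4 * (2*φ k k t + 4*t*deriv (φ k k) t + t^2 * deriv (deriv (φ k k)) t) := by
    intro k; rw [hψkk]; exact deriv2_quarter_sq_mul _ ((hφ k k).of_le (by simp))
  -- rewrite α
  have hFeq : ∀ k (y : Fin m → ℝ), (y k)^2 * Φ k y = ∏ j, ψ k j (y j) := by
    intro k y
    rw [hΦ, ← Finset.mul_prod_erase Finset.univ (fun j => ψ k j (y j)) (Finset.mem_univ k),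
      ← Finset.mul_prod_erase Finset.univ (fun j => φ k j (y j)) (Finset.mem_univ k)]
    have h1 : ∀ j ∈ Finset.univ.erase k, ψ k j (y j) = φ k j (y j) := fun j hj => by
      rw [hψne k j (Finset.ne_of_mem_erase hj)]
    rw [Finset.prod_congr rfl h1, hψkk]
    ring
  have hα' : α = fun y => ∑ k ∈ K, ∏ j, ψ k j (y j) := by
    funext y; rw [hα]; exact Finset.sum_congr rfl (fun k _ => hFeq k y)
  clear hx
  rw [hα']

  -- differentiability of updated families
  have hψ'sm : ∀ k j j', ContDiff ℝ (∞ : WithTop ℕ∞)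
      (Function.update (ψ k) j (deriv (ψ k j)) j') := by
    intro k j j'
    by_cases h : j' = j
    · subst h; rw [Function.update_self]
      exact (contDiff_infty_iff_deriv.mp (hψsm k j')).2
    · rw [Function.update_of_ne h]; exact hψsm k j'
  have hsum1 : ∀ (y v : Fin m → ℝ),
      fderiv ℝ (fun y => ∑ k ∈ K, ∏ j, ψ k j (y j)) y v
        = ∑ k ∈ K, fderiv ℝ (fun y => ∏ j, ψ k j (y j)) y v := by
    intro y v
    rw [fderiv_fun_sum (fun k _ =>
      ((pprod_contDiff _ (hψsm k)).differentiable (by simp) y))]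
    exact ContinuousLinearMap.sum_apply _ _ _
  have hderivfun : ∀ (j : Fin m),
      (fun y => fderiv ℝ (fun y => ∑ k ∈ K, ∏ j, ψ k j (y j)) y (Pi.single j 1))
        = fun y => ∑ k ∈ K, ∏ j', Function.update (ψ k) j (deriv (ψ k j)) j' (y j') := by
    intro j; funext y
    rw [hsum1 y (Pi.single j 1)]
    exact Finset.sum_congr rfl (fun k _ => congrFun (pprod_fderiv_fun (ψ k) (hψsm k) j) y)
  have hsum2 : ∀ (j : Fin m) (v : Fin m → ℝ),
      fderiv ℝ (fun y => ∑ k ∈ K, ∏ j', Function.update (ψ k) j (deriv (ψ k j)) j' (y j')) x v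
        = ∑ k ∈ K, fderiv ℝ
            (fun y => ∏ j', Function.update (ψ k) j (deriv (ψ k j)) j' (y j')) x v := by
    intro j v
    rw [fderiv_fun_sum (fun k _ =>
      ((pprod_contDiff _ (fun j' => hψ'sm k j j')).differentiable (by simp) x))]
    exact ContinuousLinearMap.sum_apply _ _ _
  -- vanishing for bad k
  have hUopen : ∀ k : Fin m, IsOpen {y : Fin m → ℝ | ε^2 < |y k|} :=
    fun k => isOpen_lt continuous_const ((continuous_apply k).abs)
  have hFzero : ∀ k : Fin m, ∀ y ∈ {y : Fin m → ℝ | ε^2 < |y k|},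
      (∏ j, ψ k j (y j)) = 0 := by
    intro k y hy
    rw [← hFeq k y, hΦ, Finset.prod_eq_zero (Finset.mem_univ k) (hsuppk k _ hy)]
    ring
  have hbad1 : ∀ k : Fin m, ε^2 < |x k| →
      fderiv ℝ (fun y => ∏ j, ψ k j (y j)) x = 0 :=
    fun k hk => fderiv_zero_on_open (hUopen k) (hFzero k) hk
  have hbad2 : ∀ (k j : Fin m), ε^2 < |x k| →
      fderiv ℝ (fun y => ∏ j', Function.update (ψ k) j (deriv (ψ k j)) j' (y j')) x = 0 := by
    intro k j hk
    refine fderiv_zero_on_open (hUopen k) (fun y hy => ?_) hk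
    rw [← congrFun (pprod_fderiv_fun (ψ k) (hψsm k) j) y,
      fderiv_zero_on_open (hUopen k) (hFzero k) hy]
    rfl
  -- pointwise bounds
  have ht2 : ∀ t : ℝ, |t| ≤ ε^2 → t^2 ≤ ε^4 := by
    intro t ht; nlinarith [sq_abs t, abs_nonneg t]
  have hb0 : ∀ k j (t : ℝ), j ≠ k → |ψ k j t| ≤ D := by
    intro k j t h; rw [hψne k j h]; exact (hφb k j t).trans hCD
  have hb0k : ∀ k (t : ℝ), |t| ≤ ε^2 → |ψ k k t| ≤ ε^4*D := by
    intro k t ht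
    simp only [hψkk]
    rw [abs_mul, abs_mul, abs_of_nonneg (sq_nonneg t),
      (by norm_num : |(1/4 : ℝ)| = 1/4)]
    have h1 : |φ k k t| ≤ D := (hφb k k t).trans hCD
    have h3 : t^2 * |φ k k t| ≤ ε^4 * D :=
      mul_le_mul (ht2 t ht) h1 (abs_nonneg _) (by positivity)
    nlinarith [abs_nonneg (φ k k t), sq_nonneg t, pow_pos hε0 4]
  have hb1 : ∀ k j (t : ℝ), j ≠ k → |deriv (ψ k j) t| ≤ D/ε := by
    intro k j t h; rw [hψne k j h]
    exact (hφ1 k j t h).trans (by gcongr)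
  have hb2 : ∀ k j (t : ℝ), j ≠ k → |deriv (deriv (ψ k j)) t| ≤ D/ε^2 := by
    intro k j t h; rw [hψne k j h]
    exact (hφ2 k j t h).trans (by gcongr)
  have hb1k : ∀ k (t : ℝ), |t| ≤ ε^2 → |deriv (ψ k k) t| ≤ ε^2*D := by
    intro k t ht
    simp only [hψd]
    have ha : |2*t*φ k k t| ≤ 2*(ε^2*C) := by
      rw [abs_mul, abs_mul, (by norm_num : |(2:ℝ)| = 2)]
      nlinarith [abs_nonneg t, abs_nonneg (φ k k t), hφb k k t, ht, hC.le]
    have hbb : |t^2*deriv (φ k k) t| ≤ ε^2*C := by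
      rw [abs_mul, abs_of_nonneg (sq_nonneg t)]
      have h4 : t^2 * |deriv (φ k k) t| ≤ ε^4 * (C/ε^2) :=
        mul_le_mul (ht2 t ht) (hφk1 k t) (abs_nonneg _) (by positivity)
      have h5 : ε^4 * (C/ε^2) = ε^2*C := by field_simp <;> ring
      rw [h5] at h4; exact h4
    have h6 : ε^2*C ≤ ε^2*D := by nlinarith [sq_nonneg ε]
    calc |1/4 * (2*t*φ k k t + t^2*deriv (φ k k) t)|
        ≤ 1/4 * (|2*t*φ k k t| + |t^2*deriv (φ k k) t|) := by
          rw [abs_mul, (by norm_num : |(1/4:ℝ)| = 1/4)]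
          exact mul_le_mul_of_nonneg_left (abs_add_le _ _) (by norm_num)
      _ ≤ ε^2*D := by nlinarith [mul_pos (mul_pos hε0 hε0) hC, sq_nonneg ε]
  have hb2k : ∀ k (t : ℝ), |t| ≤ ε^2 → |deriv (deriv (ψ k k)) t| ≤ 2*D := by
    intro k t ht
    simp only [hψdd]
    have ha : |2*φ k k t| ≤ 2*C := by
      rw [abs_mul, (by norm_num : |(2:ℝ)| = 2)]
      nlinarith [hφb k k t]
    have hbb : |4*t*deriv (φ k k) t| ≤ 4*C := by
      rw [abs_mul, abs_mul, (by norm_num : |(4:ℝ)| = 4)]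
      have h4 : |t| * |deriv (φ k k) t| ≤ ε^2 * (C/ε^2) :=
        mul_le_mul ht (hφk1 k t) (abs_nonneg _) (by positivity)
      have h5 : ε^2 * (C/ε^2) = C := by field_simp
      rw [h5] at h4; nlinarith
    have hcc : |t^2*deriv (deriv (φ k k)) t| ≤ C := by
      rw [abs_mul, abs_of_nonneg (sq_nonneg t)]
      have h4 : t^2 * |deriv (deriv (φ k k)) t| ≤ ε^4 * (C/ε^4) :=
        mul_le_mul (ht2 t ht) (hφk2 k t) (abs_nonneg _) (by positivity)
      have h5 : ε^4 * (C/ε^4) = C := by field_simp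
      rw [h5] at h4; exact h4
    calc |1/4 * (2*φ k k t + 4*t*deriv (φ k k) t + t^2*deriv (deriv (φ k k)) t)|
        ≤ 1/4 * (|2*φ k k t + 4*t*deriv (φ k k) t| + |t^2*deriv (deriv (φ k k)) t|) := by
          rw [abs_mul, (by norm_num : |(1/4:ℝ)| = 1/4)]
          exact mul_le_mul_of_nonneg_left (abs_add_le _ _) (by norm_num)
      _ ≤ 1/4 * ((|2*φ k k t| + |4*t*deriv (φ k k) t|) + |t^2*deriv (deriv (φ k k)) t|) := by
          have := abs_add_le (2*φ k k t) (4*t*deriv (φ k k) t)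
          nlinarith [abs_nonneg (t^2*deriv (deriv (φ k k)) t)]
      _ ≤ 2*D := by nlinarith [hC.le, hCD]
  -- summation helper
  have hKcard : (K.card : ℝ) ≤ (m:ℝ) := by
    have h1 : K.card ≤ m := le_trans (Finset.card_le_univ K) (by simp)
    exact_mod_cast h1
  have hsumb : ∀ (f : Fin m → ℝ) (B : ℝ), 0 ≤ B → (∀ k ∈ K, |f k| ≤ B) →
      |∑ k ∈ K, f k| ≤ (m:ℝ) * B := by
    intro f B hB hf
    calc |∑ k ∈ K, f k| ≤ ∑ k ∈ K, |f k| := Finset.abs_sum_le_sum_abs _ _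
      _ ≤ ∑ _k ∈ K, B := Finset.sum_le_sum hf
      _ = (K.card : ℝ) * B := by rw [Finset.sum_const, nsmul_eq_mul]
      _ ≤ (m:ℝ) * B := mul_le_mul_of_nonneg_right hKcard hB
  have hm24 : (m:ℝ) ≤ 2*(m:ℝ)+4 := by
    have : (0:ℝ) ≤ (m:ℝ) := Nat.cast_nonneg m
    linarith
  have hε2le : ε^2 ≤ ε := by nlinarith
  have hε21 : ε^2 ≤ 1 := by nlinarith
  have hDfact : ∀ a b : ℕ, a ≤ b → D^a ≤ D^b := fun a b h => pow_le_pow_right₀ hD1 h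
  refine ⟨?_, ?_, ?_, ?_⟩
  · -- |α x| ≤ M₀ ε⁴
    have hper : ∀ k ∈ K, |∏ j, ψ k j (x j)| ≤ ε^4 * D^(m+1) := by
      intro k _
      by_cases hk : |x k| ≤ ε^2
      · calc |∏ j, ψ k j (x j)| ≤ (ε^4*D) * D^m :=
              abs_prod_le_one_special hD1 (Finset.mem_univ k) (hb0k k (x k) hk)
                (fun j _ hj => hb0 k j (x j) hj)
          _ = ε^4 * D^(m+1) := by ring
      · rw [hFzero k x (lt_of_not_ge hk)]
        simp only [abs_zero]; positivity
    calc |∑ k ∈ K, ∏ j, ψ k j (x j)| ≤ (m:ℝ) * (ε^4 * D^(m+1)) :=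
          hsumb _ _ (by positivity) hper
      _ ≤ (2*(m:ℝ)+4) * D^(m+3) * ε^4 := by
          have h4 : (m:ℝ) * D^(m+1) ≤ (2*(m:ℝ)+4) * D^(m+3) :=
            mul_le_mul hm24 (hDfact _ _ (by omega)) (by positivity) (by positivity)
          nlinarith [pow_nonneg hε0.le 4]
  · -- first derivatives
    intro j
    rw [hsum1 x (Pi.single j 1)]
    have hper : ∀ k ∈ K,
        |fderiv ℝ (fun y => ∏ j', ψ k j' (y j')) x (Pi.single j 1)| ≤ ε^2 * D^(m+2) := by
      intro k _
      by_cases hk : |x k| ≤ ε^2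
      · rw [pprod_fderiv (ψ k)
          (fun j' => (hψsm k j').differentiable (by simp)) x j, abs_mul]
        by_cases hjk : j = k
        · subst hjk
          have h1 := hb1k j (x j) hk
          have h2 : |∏ j' ∈ Finset.univ.erase j, ψ j j' (x j')| ≤ D^m :=
            abs_prod_le_pow hD1 _ _
              (fun j' hj' => hb0 j j' (x j') (Finset.ne_of_mem_erase hj'))
          calc |deriv (ψ j j) (x j)| * |∏ j' ∈ Finset.univ.erase j, ψ j j' (x j')|
              ≤ (ε^2*D) * D^m := mul_le_mul h1 h2 (abs_nonneg _) (by positivity)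
            _ ≤ ε^2 * D^(m+2) := by
                have hd : D * D^m ≤ D^(m+2) := by
                  calc D * D^m = D^(m+1) := by ring
                    _ ≤ D^(m+2) := hDfact _ _ (by omega)
                nlinarith [mul_le_mul_of_nonneg_left hd (sq_nonneg ε)]
        · have h1 := hb1 k j (x j) hjk
          have h2 : |∏ j' ∈ Finset.univ.erase j, ψ k j' (x j')| ≤ (ε^4*D) * D^m :=
            abs_prod_le_one_special hD1
              (Finset.mem_erase.mpr ⟨fun h => hjk h.symm, Finset.mem_univ k⟩)
              (hb0k k (x k) hk)
              (fun j' _ hj' => hb0 k j' (x j') hj')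
          calc |deriv (ψ k j) (x j)| * |∏ j' ∈ Finset.univ.erase j, ψ k j' (x j')|
              ≤ (D/ε) * ((ε^4*D) * D^m) :=
                mul_le_mul h1 h2 (abs_nonneg _) (by positivity)
            _ = ε^3 * (D^2 * D^m) := by field_simp <;> ring
            _ ≤ ε^2 * D^(m+2) := by
                have he : ε^3 ≤ ε^2 := by nlinarith
                have hd : D^2 * D^m = D^(m+2) := by ring
                rw [hd]
                exact mul_le_mul_of_nonneg_right he (by positivity)
      · rw [hbad1 k (lt_of_not_ge hk)]
        simp only [ContinuousLinearMap.zero_apply, abs_zero]; positivity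
    calc |∑ k ∈ K, fderiv ℝ (fun y => ∏ j', ψ k j' (y j')) x (Pi.single j 1)|
        ≤ (m:ℝ) * (ε^2 * D^(m+2)) := hsumb _ _ (by positivity) hper
      _ ≤ (2*(m:ℝ)+4) * D^(m+3) * ε^2 := by
          have h4 : (m:ℝ) * D^(m+2) ≤ (2*(m:ℝ)+4) * D^(m+3) :=
            mul_le_mul hm24 (hDfact _ _ (by omega)) (by positivity) (by positivity)
          nlinarith [sq_nonneg ε]
  · -- mixed / strong second derivatives
    intro i j hij
    rw [hderivfun j, hsum2 j (Pi.single i 1)]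
    have hper : ∀ k ∈ K,
        |fderiv ℝ (fun y => ∏ j', Function.update (ψ k) j (deriv (ψ k j)) j' (y j')) x
          (Pi.single i 1)| ≤ ε * D^(m+3) := by
      intro k hkK
      have hrk : r ≤ (k:ℕ) := by
        have hkK' : k ∈ Finset.univ.filter (fun k : Fin m => r ≤ (k : ℕ)) := hkK
        exact (Finset.mem_filter.mp hkK').2
      by_cases hk : |x k| ≤ ε^2
      · rw [pprod_fderiv _
          (fun j' => (hψ'sm k j j').differentiable (by simp)) x i, abs_mul]
        have hnotall : ¬(i = j ∧ j = k) := by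
          rintro ⟨rfl, rfl⟩
          rcases hij with h | h | h
          · exact h rfl
          · omega
          · omega
        by_cases hij' : i = j
        · -- pure second derivative in a direction ≠ k
          have hik : i ≠ k := fun h => hnotall ⟨hij', hij' ▸ h⟩
          subst hij'
          rw [Function.update_self]
          have h1 := hb2 k i (x i) hik
          have h2 : |∏ j' ∈ Finset.univ.erase i,
              Function.update (ψ k) i (deriv (ψ k i)) j' (x j')| ≤ (ε^4*D) * D^m := by
            refine abs_prod_le_one_special hD1
              (Finset.mem_erase.mpr ⟨fun h => hik h.symm, Finset.mem_univ k⟩) ?_ ?_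
            · rw [Function.update_of_ne (fun h => hik h.symm)]
              exact hb0k k (x k) hk
            · intro j' hj' hj'k
              rw [Function.update_of_ne (Finset.ne_of_mem_erase hj')]
              exact hb0 k j' (x j') hj'k
          calc |deriv (deriv (ψ k i)) (x i)| * |∏ j' ∈ Finset.univ.erase i,
                Function.update (ψ k) i (deriv (ψ k i)) j' (x j')|
              ≤ (D/ε^2) * ((ε^4*D) * D^m) :=
                mul_le_mul h1 h2 (abs_nonneg _) (by positivity)
            _ = ε^2 * (D^2 * D^m) := by field_simp <;> ring
            _ ≤ ε * D^(m+3) := by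
                have hd : D^2 * D^m ≤ D^(m+3) := by
                  calc D^2 * D^m = D^(m+2) := by ring
                    _ ≤ D^(m+3) := hDfact _ _ (by omega)
                exact mul_le_mul hε2le hd (by positivity) hε0.le
        · rw [Function.update_of_ne hij']
          by_cases hik : i = k
          · -- i = k, j ≠ k
            have hjk : j ≠ k := fun h => hij' (hik.trans h.symm)
            rw [hik]
            have h1 := hb1k k (x k) hk
            have h2 : |∏ j' ∈ Finset.univ.erase k,
                Function.update (ψ k) j (deriv (ψ k j)) j' (x j')| ≤ (D/ε) * D^m := by
              refine abs_prod_le_one_special hD1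
                (Finset.mem_erase.mpr ⟨hjk, Finset.mem_univ j⟩) ?_ ?_
              · rw [Function.update_self]
                exact hb1 k j (x j) hjk
              · intro j' hj' hj'j
                rw [Function.update_of_ne hj'j]
                exact hb0 k j' (x j') (Finset.ne_of_mem_erase hj')
            calc |deriv (ψ k k) (x k)| * |∏ j' ∈ Finset.univ.erase k,
                  Function.update (ψ k) j (deriv (ψ k j)) j' (x j')|
                ≤ (ε^2*D) * ((D/ε) * D^m) :=
                  mul_le_mul h1 h2 (abs_nonneg _) (by positivity)
              _ = ε * (D^2 * D^m) := by field_simp <;> ring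
              _ ≤ ε * D^(m+3) := by
                  have hd : D^2 * D^m ≤ D^(m+3) := by
                    calc D^2 * D^m = D^(m+2) := by ring
                      _ ≤ D^(m+3) := hDfact _ _ (by omega)
                  exact mul_le_mul_of_nonneg_left hd hε0.le
          · by_cases hjk : j = k
            · -- j = k, i ≠ k
              have h1 := hb1 k i (x i) hik
              have h2 : |∏ j' ∈ Finset.univ.erase i,
                  Function.update (ψ k) j (deriv (ψ k j)) j' (x j')| ≤ (ε^2*D) * D^m := by
                refine abs_prod_le_one_special hD1
                  (Finset.mem_erase.mpr ⟨fun h => hij' (hjk ▸ h).symm, Finset.mem_univ k⟩) ?_ ?_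
                · rw [hjk, Function.update_self]
                  exact hb1k k (x k) hk
                · intro j' hj' hj'k
                  rw [Function.update_of_ne (hjk ▸ hj'k)]
                  exact hb0 k j' (x j') hj'k
              calc |deriv (ψ k i) (x i)| * |∏ j' ∈ Finset.univ.erase i,
                    Function.update (ψ k) j (deriv (ψ k j)) j' (x j')|
                  ≤ (D/ε) * ((ε^2*D) * D^m) :=
                    mul_le_mul h1 h2 (abs_nonneg _) (by positivity)
                _ = ε * (D^2 * D^m) := by field_simp <;> ring
                _ ≤ ε * D^(m+3) := by
                    have hd : D^2 * D^m ≤ D^(m+3) := by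
                      calc D^2 * D^m = D^(m+2) := by ring
                        _ ≤ D^(m+3) := hDfact _ _ (by omega)
                    exact mul_le_mul_of_nonneg_left hd hε0.le
            · -- i, j, k pairwise distinct
              have h1 := hb1 k i (x i) hik
              have h2 : |∏ j' ∈ Finset.univ.erase i,
                  Function.update (ψ k) j (deriv (ψ k j)) j' (x j')|
                    ≤ (D/ε) * ((ε^4*D) * D^m) := by
                refine abs_prod_le_two_special hD1
                  (Finset.mem_erase.mpr ⟨fun h => hij' h.symm, Finset.mem_univ j⟩)
                  (Finset.mem_erase.mpr ⟨fun h => hik h.symm, Finset.mem_univ k⟩)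
                  hjk ?_ ?_ ?_
                · rw [Function.update_self]
                  exact hb1 k j (x j) hjk
                · rw [Function.update_of_ne (fun h => hjk h.symm)]
                  exact hb0k k (x k) hk
                · intro j' hj' hj'j hj'k
                  rw [Function.update_of_ne hj'j]
                  exact hb0 k j' (x j') hj'k
              calc |deriv (ψ k i) (x i)| * |∏ j' ∈ Finset.univ.erase i,
                    Function.update (ψ k) j (deriv (ψ k j)) j' (x j')|
                  ≤ (D/ε) * ((D/ε) * ((ε^4*D) * D^m)) :=
                    mul_le_mul h1 h2 (abs_nonneg _) (by positivity)
                _ = ε^2 * (D^3 * D^m) := by field_simp <;> ring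
                _ ≤ ε * D^(m+3) := by
                    have hd : D^3 * D^m = D^(m+3) := by ring
                    rw [hd]
                    exact mul_le_mul_of_nonneg_right hε2le (by positivity)
      · rw [hbad2 k j (lt_of_not_ge hk)]
        simp only [ContinuousLinearMap.zero_apply, abs_zero]; positivity
    calc |∑ k ∈ K, fderiv ℝ
          (fun y => ∏ j', Function.update (ψ k) j (deriv (ψ k j)) j' (y j')) x (Pi.single i 1)|
        ≤ (m:ℝ) * (ε * D^(m+3)) := hsumb _ _ (by positivity) hper
      _ ≤ (2*(m:ℝ)+4) * D^(m+3) * ε := by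
          have h4 : (m:ℝ) * D^(m+3) ≤ (2*(m:ℝ)+4) * D^(m+3) :=
            mul_le_mul_of_nonneg_right hm24 (by positivity)
          nlinarith
  · -- pure weak second derivatives
    intro k₀ hr
    rw [hderivfun k₀, hsum2 k₀ (Pi.single k₀ 1)]
    have hper : ∀ k ∈ K,
        |fderiv ℝ (fun y => ∏ j', Function.update (ψ k) k₀ (deriv (ψ k k₀)) j' (y j')) x
          (Pi.single k₀ 1)| ≤ 2 * D^(m+3) := by
      intro k hkK
      by_cases hk : |x k| ≤ ε^2
      · rw [pprod_fderiv _
          (fun j' => (hψ'sm k k₀ j').differentiable (by simp)) x k₀, abs_mul]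
        by_cases hkk : k₀ = k
        · subst hkk
          rw [Function.update_self]
          have h1 := hb2k k₀ (x k₀) hk
          have h2 : |∏ j' ∈ Finset.univ.erase k₀,
              Function.update (ψ k₀) k₀ (deriv (ψ k₀ k₀)) j' (x j')| ≤ D^m := by
            refine abs_prod_le_pow hD1 _ _ (fun j' hj' => ?_)
            rw [Function.update_of_ne (Finset.ne_of_mem_erase hj')]
            exact hb0 k₀ j' (x j') (Finset.ne_of_mem_erase hj')
          calc |deriv (deriv (ψ k₀ k₀)) (x k₀)| * |∏ j' ∈ Finset.univ.erase k₀,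
                Function.update (ψ k₀) k₀ (deriv (ψ k₀ k₀)) j' (x j')|
              ≤ (2*D) * D^m := mul_le_mul h1 h2 (abs_nonneg _) (by positivity)
            _ ≤ 2 * D^(m+3) := by
                have hd : D * D^m ≤ D^(m+3) := by
                  calc D * D^m = D^(m+1) := by ring
                    _ ≤ D^(m+3) := hDfact _ _ (by omega)
                nlinarith
        · rw [Function.update_self]
          have h1 : |deriv (deriv (ψ k k₀)) (x k₀)| ≤ D/ε^2 :=
            hb2 k k₀ (x k₀) hkk
          have h2 : |∏ j' ∈ Finset.univ.erase k₀,
              Function.update (ψ k) k₀ (deriv (ψ k k₀)) j' (x j')| ≤ (ε^4*D) * D^m := by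
            refine abs_prod_le_one_special hD1
              (Finset.mem_erase.mpr ⟨fun h => hkk h.symm, Finset.mem_univ k⟩) ?_ ?_
            · rw [Function.update_of_ne (fun h => hkk h.symm)]
              exact hb0k k (x k) hk
            · intro j' hj' hj'k
              rw [Function.update_of_ne (Finset.ne_of_mem_erase hj')]
              exact hb0 k j' (x j') hj'k
          calc |deriv (deriv (ψ k k₀)) (x k₀)| * |∏ j' ∈ Finset.univ.erase k₀,
                Function.update (ψ k) k₀ (deriv (ψ k k₀)) j' (x j')|
              ≤ (D/ε^2) * ((ε^4*D) * D^m) :=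
                mul_le_mul h1 h2 (abs_nonneg _) (by positivity)
            _ = ε^2 * (D^2 * D^m) := by field_simp <;> ring
            _ ≤ 2 * D^(m+3) := by
                have hd : D^2 * D^m ≤ D^(m+3) := by
                  calc D^2 * D^m = D^(m+2) := by ring
                    _ ≤ D^(m+3) := hDfact _ _ (by omega)
                nlinarith [pow_pos hD0 m, pow_pos hD0 (m+3)]
      · rw [hbad2 k k₀ (lt_of_not_ge hk)]
        simp only [ContinuousLinearMap.zero_apply, abs_zero]; positivity
    calc |∑ k ∈ K, fderiv ℝ
          (fun y => ∏ j', Function.update (ψ k) k₀ (deriv (ψ k k₀)) j' (y j')) x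
            (Pi.single k₀ 1)|
        ≤ (m:ℝ) * (2 * D^(m+3)) := hsumb _ _ (by positivity) hper
      _ ≤ (2*(m:ℝ)+4) * D^(m+3) := by nlinarith [pow_pos hD0 (m+3)]
end

section
/- Suppose a differentiable function Θ : ℝ → ℝ satisfies: Θ'(t) ≥ κ > 0 for t in a union of intervals of total length at least T within each period, and Θ'(t) ≥ −M on complementary intervals each of length at most kε. If kεM < (T/2)κ and a' < b with b − a' < (κ/2)T, then a trajectory entering with Θ ≥ a' at the start of a good interval satisfies Θ ≥ a' at all subsequent times and returns to Θ ≥ b by time T/2 after each bad interval. In particular, if orbits spend time at most kε in the 'bad' region and at least T in the 'good' region alternately, and kε ≤ (b−a')/M, then the cone interval [a', b] is preserved: Θ never drops below a'. -/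
/-!
The opening `Θ` can only fall below a level of the band `[a', b]` by crossing it downwards, and
at such a crossing `Θ' ≥ κ > 0`; so on a good interval every level of the band, once reached, is
kept, and comparison with the ramp of slope `2 (b - a') / T < κ` shows that `b` is reached within
time `T / 2`. On a bad interval `Θ` drops by at most `kε M ≤ b - a'`, so from `Θ ≥ b` it stays
above `a'`. An induction over the intervals concludes.
-/

open Set

theorem le_image_of_deriv_right_pos_at_level {f f' : ℝ → ℝ} {a b ℓ : ℝ}
    (hf : ContinuousOn f (Icc a b)) (hf' : ∀ x ∈ Ico a b, HasDerivWithinAt f (f' x) (Ici x) x)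
    (ha : ℓ ≤ f a) (hpos : ∀ x ∈ Ico a b, f x = ℓ → 0 < f' x) :
    ∀ ⦃x⦄, x ∈ Icc a b → ℓ ≤ f x := by
  intro x hx
  have := image_le_of_deriv_right_lt_deriv_boundary (B := fun _ => -ℓ) (B' := fun _ => 0)
    hf.neg (fun x hx => (hf' x hx).neg) (neg_le_neg ha) (fun _ => hasDerivAt_const _ _)
    (fun x hx hx' => neg_lt_zero.mpr (hpos x hx (neg_inj.mp hx'))) hx
  exact neg_le_neg_iff.mp this

theorem Monotone.exists_mem_Icc_succ {α : Type*} [LinearOrder α] {u : ℕ → α} (hu : Monotone u)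
    {t : α} (h0 : u 0 ≤ t) :
    ∀ {j}, t ≤ u j → ∃ n, t ∈ Icc (u n) (u (n + 1))
  | 0, hj => ⟨0, h0, hj.trans (hu (Nat.zero_le 1))⟩
  | j + 1, hj => by
    rcases le_or_gt t (u j) with htj | htj
    · exact hu.exists_mem_Icc_succ h0 htj
    · exact ⟨j, htj.le, hj⟩

section BandDeriv

variable {f : ℝ → ℝ} {a b κ p q : ℝ}

theorem le_image_of_deriv_ge_in_band (hf : Differentiable ℝ f) (hκ : 0 < κ)
    (hd : ∀ t ∈ Icc p q, a ≤ f t → f t ≤ b → κ ≤ deriv f t) {ℓ : ℝ} (hℓ : ℓ ∈ Icc a b)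
    (hp : ℓ ≤ f p) : ∀ ⦃t⦄, t ∈ Icc p q → ℓ ≤ f t :=
  le_image_of_deriv_right_pos_at_level hf.continuous.continuousOn
    (fun x _ => (hf x).hasDerivAt.hasDerivWithinAt) hp fun x hx hfx =>
      hκ.trans_le (hd x (Ico_subset_Icc_self hx) (hfx ▸ hℓ.1) (hfx ▸ hℓ.2))

theorem ramp_le_image_of_deriv_ge_in_band (hf : Differentiable ℝ f)
    (hd : ∀ t ∈ Icc p q, a ≤ f t → f t ≤ b → κ ≤ deriv f t) {l : ℝ} (hl0 : 0 ≤ l) (hl : l < κ)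
    (hp : a ≤ f p) : ∀ ⦃t⦄, t ∈ Icc p q → a + l * (t - p) ≤ b → a + l * (t - p) ≤ f t := by
  intro t ht htb
  have hg : ∀ x, HasDerivAt (fun x => f x - l * (x - p)) (deriv f x - l) x := fun x =>
    ((hf x).hasDerivAt.sub (((hasDerivAt_id' x).sub_const p).const_mul l)).congr_deriv (by ring)
  have key := le_image_of_deriv_right_pos_at_level (f := fun x => f x - l * (x - p)) (ℓ := a)
    (fun x _ => (hg x).continuousAt.continuousWithinAt) (fun x _ => (hg x).hasDerivWithinAt)
    (by simpa using hp) ?_ (right_mem_Icc.mpr ht.1)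
  · linarith
  intro x hx hfx
  have hrise : 0 ≤ l * (x - p) := mul_nonneg hl0 (sub_nonneg.mpr hx.1)
  have hrise' : l * (x - p) ≤ l * (t - p) := by gcongr; exact hx.2.le
  have := hd x ⟨hx.1, hx.2.le.trans ht.2⟩ (by linarith) (by linarith)
  linarith

theorem le_image_of_deriv_ge_in_band_after (hf : Differentiable ℝ f) (hκ : 0 < κ)
    (hd : ∀ t ∈ Icc p q, a ≤ f t → f t ≤ b → κ ≤ deriv f t) (hab : a ≤ b) {τ : ℝ} (hτ : 0 < τ)
    (hτb : b - a < κ * τ) (hp : a ≤ f p) : ∀ ⦃t⦄, t ∈ Icc p q → p + τ ≤ t → b ≤ f t := by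
  intro t ht hτt
  have hmid : p + τ ∈ Icc p q := ⟨by linarith, hτt.trans ht.2⟩
  have hslope : (b - a) / τ < κ := (div_lt_iff₀ hτ).mpr hτb
  have hreach : a + (b - a) / τ * (p + τ - p) = b := by field_simp; ring
  have hb : b ≤ f (p + τ) := hreach ▸ ramp_le_image_of_deriv_ge_in_band hf hd
    (div_nonneg (sub_nonneg.mpr hab) hτ.le) hslope hp hmid hreach.le
  exact le_image_of_deriv_ge_in_band hf hκ (fun x hx => hd x (Icc_subset_Icc_left hmid.1 hx))
    ⟨hab, le_rfl⟩ hb ⟨hτt, ht.2⟩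

end BandDeriv

theorem stmt_17_general (Θ : ℝ → ℝ) (hΘ : Differentiable ℝ Θ)
    (κ M T kε a' b : ℝ)
    (hκ : 0 < κ) (hM : 0 ≤ M) (hT : 0 < T)
    (hab : a' < b)
    (h2 : b - a' < (κ/2) * T)
    (h3 : kε * M ≤ b - a')
    (u : ℕ → ℝ) (hu : StrictMono u)
    (hbadlen : ∀ i, u (2*i+1) - u (2*i) ≤ kε)
    (hgoodlen : ∀ i, T ≤ u (2*i+2) - u (2*i+1))
    (hbad : ∀ i, ∀ t ∈ Set.Icc (u (2*i)) (u (2*i+1)), -M ≤ deriv Θ t)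
    (hgood : ∀ i, ∀ t ∈ Set.Icc (u (2*i+1)) (u (2*i+2)),
      a' ≤ Θ t → Θ t ≤ b → κ ≤ deriv Θ t)
    (hstart : b ≤ Θ (u 0)) :
    (∀ t, u 0 ≤ t → (∃ j, t ≤ u j) → a' ≤ Θ t) ∧
    (∀ i, ∀ t, u (2*i+1) + T/2 ≤ t → t ≤ u (2*i+2) → b ≤ Θ t) := by
  have on_bad : ∀ i, b ≤ Θ (u (2*i)) → ∀ t ∈ Icc (u (2*i)) (u (2*i+1)), a' ≤ Θ t := by
    intro i hi t ht
    have hdrop := (convex_Icc _ _).mul_sub_le_image_sub_of_le_deriv hΘ.continuous.continuousOn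
      hΘ.differentiableOn (fun x hx => hbad i x (interior_subset hx)) _
      (left_mem_Icc.mpr (ht.1.trans ht.2)) t ht ht.1
    have hlen : M * (t - u (2*i)) ≤ M * kε :=
      mul_le_mul_of_nonneg_left (by linarith [hbadlen i, ht.2]) hM
    linarith
  have at_odd : ∀ i, b ≤ Θ (u (2*i)) → a' ≤ Θ (u (2*i+1)) := fun i hi =>
    on_bad i hi _ (right_mem_Icc.mpr (hu.monotone (by omega)))
  have on_good : ∀ i, a' ≤ Θ (u (2*i+1)) →
      ∀ t, u (2*i+1) + T/2 ≤ t → t ≤ u (2*i+2) → b ≤ Θ t := fun i hi t ht ht' =>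
    le_image_of_deriv_ge_in_band_after hΘ hκ (hgood i) hab.le (half_pos hT) (by linarith) hi
      ⟨by linarith, ht'⟩ ht
  have at_even : ∀ i, b ≤ Θ (u (2*i)) := by
    intro i
    induction i with
    | zero => exact hstart
    | succ i ih => exact on_good i (at_odd i ih) (u (2*i+2)) (by linarith [hgoodlen i]) le_rfl
  refine ⟨fun t ht ⟨j, hj⟩ => ?_, fun i => on_good i (at_odd i (at_even i))⟩
  obtain ⟨n, hn⟩ := hu.monotone.exists_mem_Icc_succ ht hj
  obtain ⟨i, rfl | rfl⟩ := Nat.even_or_odd' n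
  · exact on_bad i (at_even i) t hn
  · exact le_image_of_deriv_ge_in_band hΘ hκ (hgood i) ⟨le_rfl, hab.le⟩ (at_odd i (at_even i)) hn

/-- abstract time-spent argument for cone preservation: if `Θ` decreases at rate
at most `M` on alternating 'bad' intervals of length at most `kε` and increases at rate at
least `κ` on 'good' intervals of length at least `T` whenever `Θ ∈ [a',b]`, with
`kεM < (T/2)κ`, `b − a' < (κ/2)T` and `kεM ≤ b − a'`, then starting from `Θ ≥ b` the value
`Θ` never drops below `a'`, and returns to `Θ ≥ b` by time `T/2` into each good interval. -/
theorem stmt_17 (Θ : ℝ → ℝ) (hΘ : Differentiable ℝ Θ)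
    (κ M T kε a' b : ℝ)
    (hκ : 0 < κ) (hM : 0 ≤ M) (hT : 0 < T) (hkε : 0 ≤ kε)
    (hab : a' < b)
    (h1 : kε * M < (T/2) * κ)
    (h2 : b - a' < (κ/2) * T)
    (h3 : kε * M ≤ b - a')
    (u : ℕ → ℝ) (hu : StrictMono u)
    (hbadlen : ∀ i, u (2*i+1) - u (2*i) ≤ kε)
    (hgoodlen : ∀ i, T ≤ u (2*i+2) - u (2*i+1))
    (hbad : ∀ i, ∀ t ∈ Set.Icc (u (2*i)) (u (2*i+1)), -M ≤ deriv Θ t)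
    (hgood : ∀ i, ∀ t ∈ Set.Icc (u (2*i+1)) (u (2*i+2)),
      a' ≤ Θ t → Θ t ≤ b → κ ≤ deriv Θ t)
    (hstart : b ≤ Θ (u 0)) :
    (∀ t, u 0 ≤ t → (∃ j, t ≤ u j) → a' ≤ Θ t) ∧
    (∀ i, ∀ t, u (2*i+1) + T/2 ≤ t → t ≤ u (2*i+2) → b ≤ Θ t) :=
  stmt_17_general Θ hΘ κ M T kε a' b hκ hM hT hab h2 h3 u hu hbadlen hgoodlen hbad hgood hstart
end
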